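/- Fix Δ ∈ ℝ and 0 < δ < 1, and define in ℝ⁴ the points u = (1,0,0,Δ), v = (1,1,0,Δ), w = (0,1,0,Δ), p = (0,0,0,Δ+δ). Then every three of these four points are affinely independent, and each of the four triangles [u,v,w], [u,v,p], [u,w,p], [v,w,p] has circumradius at most √((1+δ²)/2), which is strictly less than 1. -/

import Mathlib

noncomputable def pt (a b c d : ℝ) : EuclideanSpace ℝ (Fin 4) := WithLp.toLp 2 ![a, b, c, d]

/-!
All four points lie on the sphere of radius `√((1 + δ²)/2)` about `(1/2, 1/2, δ/2, Δ + δ/2)`.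
Three distinct points of a sphere are never collinear, and the circumcentre of a triangle
inscribed in a sphere is the foot of the perpendicular from the sphere's centre to the plane of
the triangle, so by Pythagoras its circumradius is at most the radius of the sphere.
-/

open EuclideanGeometry

theorem Affine.Simplex.circumradius_le_of_forall_mem_sphere {V P : Type*}
    [NormedAddCommGroup V] [InnerProductSpace ℝ V] [MetricSpace P] [NormedAddTorsor V P] {n : ℕ}
    (s : Affine.Simplex ℝ P n) {S : Sphere P} (hS : ∀ i, s.points i ∈ S) :
    s.circumradius ≤ S.radius := by
  have hdist : ∀ i, dist (s.points i) S.center = S.radius := fun i => mem_sphere.1 (hS i)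
  have hpyth := s.dist_circumcenter_sq_eq_sq_sub_circumradius hdist
    (s.orthogonalProjection_eq_circumcenter_of_dist_eq hdist)
    (mem_affineSpan ℝ (Set.mem_range_self 0))
  have hr : 0 ≤ S.radius := hdist 0 ▸ dist_nonneg
  nlinarith [mul_self_nonneg (dist S.center s.circumcenter), s.circumradius_nonneg]

theorem pt_inj {a b c d a' b' c' d' : ℝ} :
    pt a b c d = pt a' b' c' d' ↔ a = a' ∧ b = b' ∧ c = c' ∧ d = d' := by
  simp [pt]

theorem dist_pt_sq (a b c d a' b' c' d' : ℝ) :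
    dist (pt a b c d) (pt a' b' c' d') ^ 2 =
      (a - a') ^ 2 + (b - b') ^ 2 + (c - c') ^ 2 + (d - d') ^ 2 := by
  rw [EuclideanSpace.dist_eq, Real.sq_sqrt (by positivity)]
  simp [pt, Fin.sum_univ_four, Real.dist_eq, sq_abs]

noncomputable def facetSphere (Δ δ : ℝ) : Sphere (EuclideanSpace ℝ (Fin 4)) :=
  ⟨pt (1/2) (1/2) (δ/2) (Δ + δ/2), √((1 + δ ^ 2) / 2)⟩

theorem pt_mem_facetSphere {Δ δ a b c d : ℝ}
    (h : (a - 1/2) ^ 2 + (b - 1/2) ^ 2 + (c - δ/2) ^ 2 + (d - (Δ + δ/2)) ^ 2 = (1 + δ ^ 2) / 2) :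
    pt a b c d ∈ facetSphere Δ δ := by
  rw [mem_sphere, facetSphere, ← Real.sqrt_sq dist_nonneg, dist_pt_sq, h]

/-- Every three of the four points `u, v, w, p` are affinely independent, and each of the
four triangles has circumradius at most `√((1+δ²)/2) < 1` (for `0 < δ < 1`). -/
theorem facets_circumradius_lt_one (Δ δ : ℝ) (hδ0 : 0 < δ) (hδ1 : δ < 1) :
    AffineIndependent ℝ ![pt 1 0 0 Δ, pt 1 1 0 Δ, pt 0 1 0 Δ] ∧
    AffineIndependent ℝ ![pt 1 0 0 Δ, pt 1 1 0 Δ, pt 0 0 0 (Δ + δ)] ∧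
    AffineIndependent ℝ ![pt 1 0 0 Δ, pt 0 1 0 Δ, pt 0 0 0 (Δ + δ)] ∧
    AffineIndependent ℝ ![pt 1 1 0 Δ, pt 0 1 0 Δ, pt 0 0 0 (Δ + δ)] ∧
    (∀ h : AffineIndependent ℝ ![pt 1 0 0 Δ, pt 1 1 0 Δ, pt 0 1 0 Δ],
      (⟨_, h⟩ : Affine.Simplex ℝ (EuclideanSpace ℝ (Fin 4)) 2).circumradius
        ≤ Real.sqrt ((1 + δ^2)/2)) ∧
    (∀ h : AffineIndependent ℝ ![pt 1 0 0 Δ, pt 1 1 0 Δ, pt 0 0 0 (Δ + δ)],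
      (⟨_, h⟩ : Affine.Simplex ℝ (EuclideanSpace ℝ (Fin 4)) 2).circumradius
        ≤ Real.sqrt ((1 + δ^2)/2)) ∧
    (∀ h : AffineIndependent ℝ ![pt 1 0 0 Δ, pt 0 1 0 Δ, pt 0 0 0 (Δ + δ)],
      (⟨_, h⟩ : Affine.Simplex ℝ (EuclideanSpace ℝ (Fin 4)) 2).circumradius
        ≤ Real.sqrt ((1 + δ^2)/2)) ∧
    (∀ h : AffineIndependent ℝ ![pt 1 1 0 Δ, pt 0 1 0 Δ, pt 0 0 0 (Δ + δ)],
      (⟨_, h⟩ : Affine.Simplex ℝ (EuclideanSpace ℝ (Fin 4)) 2).circumradius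
        ≤ Real.sqrt ((1 + δ^2)/2)) ∧
    Real.sqrt ((1 + δ^2)/2) < 1 := by
  have hu : pt 1 0 0 Δ ∈ facetSphere Δ δ := pt_mem_facetSphere (by ring)
  have hv : pt 1 1 0 Δ ∈ facetSphere Δ δ := pt_mem_facetSphere (by ring)
  have hw : pt 0 1 0 Δ ∈ facetSphere Δ δ := pt_mem_facetSphere (by ring)
  have hp : pt 0 0 0 (Δ + δ) ∈ facetSphere Δ δ := pt_mem_facetSphere (by ring)
  have hS := (facetSphere Δ δ).cospherical
  have hcirc : ∀ {a b c : EuclideanSpace ℝ (Fin 4)} (h : AffineIndependent ℝ ![a, b, c]),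
      a ∈ facetSphere Δ δ → b ∈ facetSphere Δ δ → c ∈ facetSphere Δ δ →
      (⟨_, h⟩ : Affine.Simplex ℝ _ 2).circumradius ≤ √((1 + δ ^ 2) / 2) :=
    fun h ha hb hc => Affine.Simplex.circumradius_le_of_forall_mem_sphere
      (S := facetSphere Δ δ) _ <| by simp [Fin.forall_fin_succ, ha, hb, hc]
  refine ⟨hS.affineIndependent_of_mem_of_ne hu hv hw ?_ ?_ ?_,
    hS.affineIndependent_of_mem_of_ne hu hv hp ?_ ?_ ?_,
    hS.affineIndependent_of_mem_of_ne hu hw hp ?_ ?_ ?_,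
    hS.affineIndependent_of_mem_of_ne hv hw hp ?_ ?_ ?_,
    fun h => hcirc h hu hv hw, fun h => hcirc h hu hv hp, fun h => hcirc h hu hw hp,
    fun h => hcirc h hv hw hp, (Real.sqrt_lt' one_pos).2 (by nlinarith)⟩
  all_goals simp [pt_inj]
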